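/- arXiv:2003.02730 — 3 statements merged into one kernel-verified Lean document; each statement's English description precedes it below -/
import Mathlib

section
/- For a finite Coxeter group W and q ∈ (0,1], the Mallows measure M(w) = q^{-ℓ(w)}/Z, where Z = Σ_{w∈W} q^{-ℓ(w)}, satisfies the detailed balance equation M(w) · P_s(w, w') = M(w') · P_s(w', w) for every simple reflection s and all w, w' ∈ W, where P_s is the Markov transition kernel of multiplication by T_s: from w, the chain moves to sw with probability 1 if ℓ(sw) = ℓ(w)+1, and with probability q (staying at w with probability 1-q) if ℓ(sw) = ℓ(w)-1. -/
private lemma mallows_aux {B W : Type*} [Group W] [DecidableEq W]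
    {M : CoxeterMatrix B} (cs : CoxeterSystem M W)
    (q : ℝ) (hq0 : 0 < q) (b : B) (w w' : W) :
    q ^ (-(cs.length w : ℤ)) *
      (if cs.length (cs.simple b * w) > cs.length w then (if w' = cs.simple b * w then (1:ℝ) else 0)
        else (if w' = cs.simple b * w then q else 0) + (if w' = w then 1 - q else 0)) =
    q ^ (-(cs.length w' : ℤ)) *
      (if cs.length (cs.simple b * w') > cs.length w' then (if w = cs.simple b * w' then (1:ℝ) else 0)
        else (if w = cs.simple b * w' then q else 0) + (if w = w' then 1 - q else 0)) := by
  by_cases hww' : w' = w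
  · subst hww'; rfl
  · by_cases hsw : w' = cs.simple b * w
    · subst hsw
      have hw : w = cs.simple b * (cs.simple b * w) := (cs.simple_mul_simple_cancel_left b).symm
      have hc : cs.simple b * (cs.simple b * w) = w := cs.simple_mul_simple_cancel_left b
      rcases cs.length_simple_mul w b with h | h
      · have h1 : cs.length w < cs.length (cs.simple b * w) := by omega
        have h2 : ¬ cs.length (cs.simple b * (cs.simple b * w)) > cs.length (cs.simple b * w) := by
          rw [hc]; omega
        rw [if_pos h1, if_neg h2, if_pos rfl, hc, if_pos rfl, if_neg (fun he => hww' he.symm), h]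
        push_cast
        rw [mul_one, add_zero, neg_add, zpow_add₀ hq0.ne', zpow_neg_one]
        field_simp
      · have h1 : ¬ cs.length (cs.simple b * w) > cs.length w := by omega
        have h2 : cs.length (cs.simple b * (cs.simple b * w)) > cs.length (cs.simple b * w) := by
          rw [hc]; omega
        rw [if_neg h1, if_pos h2, if_pos rfl, if_neg hww', hc, if_pos rfl, ← h]
        push_cast
        rw [mul_one, add_zero, neg_add, zpow_add₀ hq0.ne', zpow_neg_one]
        field_simp
    · have hsw' : w ≠ cs.simple b * w' := by
        intro he
        apply hsw
        rw [he, cs.simple_mul_simple_cancel_left]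
      have hww : w ≠ w' := fun he => hww' he.symm
      split_ifs <;> simp_all

/-- Detailed balance for the Mallows measure.  For a finite Coxeter group `W`, `q ∈ (0,1]`,
the Mallows measure `Mal w = q^{-ℓ(w)} / Z` with `Z = ∑_v q^{-ℓ(v)}` satisfies
`Mal w * P_s w w' = Mal w' * P_s w' w` for every simple reflection `s` and all `w, w'`,
where `P_s` is the Markov kernel of multiplication by `T s`: from `w` the chain moves to `s*w`
with probability `1` if `ℓ(s*w) > ℓ(w)`, and with probability `q` (staying at `w` with
probability `1-q`) if `ℓ(s*w) < ℓ(w)`. -/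
theorem mallows_detailed_balance
    {B W : Type*} [Group W] [Fintype W] [DecidableEq W]
    {M : CoxeterMatrix B} (cs : CoxeterSystem M W)
    (q : ℝ) (hq0 : 0 < q) (hq1 : q ≤ 1) (b : B) (w w' : W) :
    (fun v : W => q ^ (-(cs.length v : ℤ)) / ∑ u : W, q ^ (-(cs.length u : ℤ))) w *
      (fun u v : W =>
        if cs.length (cs.simple b * u) > cs.length u then (if v = cs.simple b * u then 1 else 0)
        else (if v = cs.simple b * u then q else 0) + (if v = u then 1 - q else 0)) w w' =
    (fun v : W => q ^ (-(cs.length v : ℤ)) / ∑ u : W, q ^ (-(cs.length u : ℤ))) w' *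
      (fun u v : W =>
        if cs.length (cs.simple b * u) > cs.length u then (if v = cs.simple b * u then 1 else 0)
        else (if v = cs.simple b * u then q else 0) + (if v = u then 1 - q else 0)) w' w := by
  simp only [div_mul_eq_mul_div]
  rw [mallows_aux cs q hq0 b w w']
end

section
/- The Mallows measure on a finite Coxeter group is a stationary measure for the Markov kernel P_s for every simple reflection s: for all w' ∈ W, Σ_{w∈W} M(w) P_s(w, w') = M(w'). -/
/-- The Mallows measure on a finite Coxeter group is stationary for the Markov kernel `P_s` of
multiplication by `T s`, for every simple reflection `s`:
`∑_w Mal w * P_s w w' = Mal w'` for all `w'`. -/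
theorem mallows_stationary
    {B W : Type*} [Group W] [Fintype W] [DecidableEq W]
    {M : CoxeterMatrix B} (cs : CoxeterSystem M W)
    (q : ℝ) (hq0 : 0 < q) (hq1 : q ≤ 1) (b : B) (w' : W) :
    ∑ w : W,
      (q ^ (-(cs.length w : ℤ)) / ∑ u : W, q ^ (-(cs.length u : ℤ))) *
      (if cs.length (cs.simple b * w) > cs.length w then (if w' = cs.simple b * w then 1 else 0)
       else (if w' = cs.simple b * w then q else 0) + (if w' = w then 1 - q else 0)) =
    q ^ (-(cs.length w' : ℤ)) / ∑ u : W, q ^ (-(cs.length u : ℤ)) := by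
  have hq0' : q ≠ 0 := ne_of_gt hq0
  set s := cs.simple b with hs
  set Z : ℝ := ∑ u : W, q ^ (-(cs.length u : ℤ)) with hZ
  set f : W → ℝ := fun w =>
      (q ^ (-(cs.length w : ℤ)) / Z) *
      (if cs.length (s * w) > cs.length w then (if w' = s * w then 1 else 0)
       else (if w' = s * w then q else 0) + (if w' = w then 1 - q else 0)) with hf
  have hcancel : s * (s * w') = w' := cs.simple_mul_simple_cancel_left b
  have hne : s * w' ≠ w' := by
    intro h
    exact cs.length_simple_mul_ne w' b (by rw [h])
  have hne' : w' ≠ s * w' := Ne.symm hne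
  have hsum : ∑ w : W, f w = f (s * w') + f w' := by
    apply Finset.sum_eq_add_of_mem (s * w') w' (Finset.mem_univ _) (Finset.mem_univ _) hne
    intro c _ ⟨hc1, hc2⟩
    have h1 : w' ≠ s * c := by
      intro h
      apply hc1
      rw [h, cs.simple_mul_simple_cancel_left]
    have h2 : w' ≠ c := fun h => hc2 h.symm
    simp [hf, h1, h2]
  rw [hsum]
  rcases cs.length_simple_mul w' b with h | h
  · -- ascent: ℓ(s w') = ℓ(w') + 1
    rw [← hs] at h
    have hlt : ¬ cs.length (s * (s * w')) > cs.length (s * w') := by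
      rw [hcancel]; omega
    have hgt : cs.length (s * w') > cs.length w' := by omega
    have e1 : f (s * w') = (q ^ (-(cs.length (s * w') : ℤ)) / Z) * q := by
      simp only [hf]
      rw [if_neg hlt, hcancel, if_pos rfl, if_neg hne', add_zero]
    have e2 : f w' = 0 := by
      simp only [hf]
      rw [if_pos hgt, if_neg hne', mul_zero]
    rw [e1, e2, h, add_zero]
    push_cast
    rw [div_mul_eq_mul_div]
    congr 1
    rw [← zpow_add_one₀ hq0']
    congr 1
    ring
  · -- descent: ℓ(s w') + 1 = ℓ(w')
    rw [← hs] at h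
    have hgt : cs.length (s * (s * w')) > cs.length (s * w') := by
      rw [hcancel]; omega
    have hlt : ¬ cs.length (s * w') > cs.length w' := by omega
    have e1 : f (s * w') = q ^ (-(cs.length (s * w') : ℤ)) / Z := by
      simp only [hf]
      rw [if_pos hgt, hcancel, if_pos rfl, mul_one]
    have e2 : f w' = (q ^ (-(cs.length w' : ℤ)) / Z) * (1 - q) := by
      simp only [hf]
      rw [if_neg hlt, if_neg hne']; simp
    rw [e1, e2]
    have hl : (cs.length (s * w') : ℤ) = (cs.length w' : ℤ) - 1 := by omega
    rw [hl]
    have hz : q ^ (-((cs.length w' : ℤ) - 1)) = q ^ (-(cs.length w' : ℤ)) * q := by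
      rw [← zpow_add_one₀ hq0']
      congr 1
      ring
    rw [hz]
    ring
end

section
/- Start with a Bernoulli(α) product configuration on sites k, k+1, …, l (each site independently occupied with probability α), and sequentially apply ASEP discrete update steps with parameter q at bonds (l−1,l), (l−2,l−1), …, (k,k+1) in this order, where an update at bond (i,i+1) swaps a particle at i with a hole at i+1 with probability 1, and swaps a particle at i+1 with a hole at i with probability q. Then for each m = 1, 2, …, l−k, the probability that site l−m is occupied after the updates at bonds (l−1,l) through (l−m, l−m+1) equals α(α + (1−α)q)^m. -/
/-- The ASEP discrete-update Markov kernel at the bond `(p, p+1)` (sites labelled `0,…,n`;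
`true` = particle, `false` = hole): a particle at `p` and a hole at `p+1` swap with
probability `1`; a hole at `p` and a particle at `p+1` swap with probability `q` (nothing
happens with probability `1-q`); otherwise nothing happens.  If `p+1 > n` the kernel is the
identity (this case is never used below). -/
noncomputable def asepStep (q : ℝ) (n : ℕ) (p : ℕ) (η η' : Fin (n + 1) → Bool) : ℝ :=
  if h : p + 1 ≤ n then
    let a : Fin (n + 1) := ⟨p, by omega⟩
    let b : Fin (n + 1) := ⟨p + 1, by omega⟩
    let sw : Fin (n + 1) → Bool :=
      Function.update (Function.update η a (η b)) b (η a)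
    if η a = true ∧ η b = false then (if η' = sw then 1 else 0)
    else if η a = false ∧ η b = true then
      (if η' = sw then q else 0) + (if η' = η then 1 - q else 0)
    else (if η' = η then 1 else 0)
  else (if η' = η then 1 else 0)

/-- The distribution of the configuration on sites `0,…,n` after `m` update steps, starting
from the Bernoulli(α) product measure and applying updates at the bonds
`(n-1, n), (n-2, n-1), …` in this order (the `(m+1)`-st update is at the bond
`(n-m-1, n-m)`). -/
noncomputable def asepEvolve (q α : ℝ) (n : ℕ) : ℕ → (Fin (n + 1) → Bool) → ℝ
  | 0 => fun η => ∏ i : Fin (n + 1), (if η i then α else 1 - α)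
  | m + 1 => fun η' => ∑ η : Fin (n + 1) → Bool,
      asepEvolve q α n m η * asepStep q n (n - m - 1) η η'

lemma update_eq_iff {n : ℕ} (i : Fin n) {v : Bool} (w : Bool) {η' χ : Fin n → Bool}
    (hv : χ i = v) :
    (Function.update η' i v = χ) ↔ (Function.update η' i w = Function.update χ i w) := by
  simp only [funext_iff, Function.update_apply]
  constructor <;> intro h j <;> have hj := h j <;> by_cases hij : j = i <;> simp_all

lemma asepStep_vanish (q : ℝ) {n p : ℕ} (hp : p + 1 ≤ n) {i : Fin (n+1)}
    (hia : (i : ℕ) ≠ p) (hib : (i : ℕ) ≠ p + 1) {η : Fin (n+1) → Bool}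
    (η' : Fin (n+1) → Bool) {v : Bool} (hv : η i ≠ v) :
    asepStep q n p η (Function.update η' i v) = 0 := by
  have ha : i ≠ (⟨p, by omega⟩ : Fin (n+1)) := by simp [Fin.ext_iff, hia]
  have hb : i ≠ (⟨p+1, by omega⟩ : Fin (n+1)) := by simp [Fin.ext_iff, hib]
  have h1 : Function.update η' i v ≠ η := by
    intro h
    apply hv
    rw [← h, Function.update_self]
  have h2 : Function.update η' i v ≠
      Function.update (Function.update η (⟨p, by omega⟩ : Fin (n+1))
        (η ⟨p+1, by omega⟩)) (⟨p+1, by omega⟩ : Fin (n+1)) (η ⟨p, by omega⟩) := by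
    intro h
    apply hv
    have := congrFun h i
    rw [Function.update_self] at this
    rw [this, Function.update_of_ne hb, Function.update_of_ne ha]
  simp only [asepStep, dif_pos hp]
  split_ifs <;> simp_all

lemma asepStep_update (q : ℝ) {n p : ℕ} (hp : p + 1 ≤ n) {i : Fin (n+1)}
    (hia : (i : ℕ) ≠ p) (hib : (i : ℕ) ≠ p + 1) {η : Fin (n+1) → Bool}
    (η' : Fin (n+1) → Bool) {v : Bool} (w : Bool) (hv : η i = v) :
    asepStep q n p η (Function.update η' i v)
      = asepStep q n p (Function.update η i w) (Function.update η' i w) := by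
  simp only [asepStep, dif_pos hp]
  set a : Fin (n+1) := ⟨p, by omega⟩ with ha'
  set b : Fin (n+1) := ⟨p+1, by omega⟩ with hb'
  have ha : i ≠ a := by simp [ha', Fin.ext_iff, hia]
  have hb : i ≠ b := by simp [hb', Fin.ext_iff, hib]
  have hab : a ≠ b := by simp [ha', hb', Fin.ext_iff]
  have e1 : Function.update η i w a = η a := Function.update_of_ne ha.symm _ _
  have e2 : Function.update η i w b = η b := Function.update_of_ne hb.symm _ _
  rw [e1, e2]
  have esw : Function.update (Function.update (Function.update η i w) a (η b)) b (η a)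
      = Function.update (Function.update (Function.update η a (η b)) b (η a)) i w := by
    rw [Function.update_comm ha, Function.update_comm hb]
  rw [esw]
  have hswi : Function.update (Function.update η a (η b)) b (η a) i = v := by
    rw [Function.update_of_ne hb, Function.update_of_ne ha, hv]
  simp only [update_eq_iff i w hswi, update_eq_iff i w hv]

lemma asepStep_colsum (q : ℝ) {n p : ℕ} (hp : p + 1 ≤ n) (η : Fin (n+1) → Bool) :
    ∑ η' : Fin (n+1) → Bool,
        (if η' ⟨p, by omega⟩ = true then asepStep q n p η η' else 0)
      = if η ⟨p+1, by omega⟩ = true then (if η ⟨p, by omega⟩ = true then (1:ℝ) else q)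
        else 0 := by
  simp only [asepStep, dif_pos hp]
  set a : Fin (n+1) := ⟨p, by omega⟩ with ha'
  set b : Fin (n+1) := ⟨p+1, by omega⟩ with hb'
  have hab : a ≠ b := by simp [ha', hb', Fin.ext_iff]
  set swc : Fin (n+1) → Bool := Function.update (Function.update η a (η b)) b (η a) with hsw
  have key : ∀ (c : Fin (n+1) → Bool) (r : ℝ),
      (∑ η' : Fin (n+1) → Bool, if η' a = true then (if η' = c then r else 0) else 0)
        = if c a = true then r else 0 := by
    intro c r
    rw [Finset.sum_congr rfl (fun η' _ =>
      show _ = (if η' = c then (if c a = true then r else 0) else 0) by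
        by_cases h : η' = c <;> simp [h])]
    simp [Finset.sum_ite_eq']
  have hswa : swc a = η b := by
    rw [hsw, Function.update_of_ne hab, Function.update_self]
  rcases h1 : η a <;> rcases h2 : η b <;> simp only [h1, h2, Bool.false_eq_true,
    Bool.true_eq_false, and_self, and_true, and_false, false_and, if_true, if_false,
    true_and, ite_false, ite_true]
  · rw [key η 1, h1]; simp
  · rw [Finset.sum_congr rfl (fun η' _ =>
      show _ = ((if η' a = true then (if η' = swc then q else 0) else 0)
        + (if η' a = true then (if η' = η then 1 - q else 0) else 0)) by
        by_cases h : η' a = true <;> simp [h])]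
    rw [Finset.sum_add_distrib, key swc q, key η (1-q), hswa, h1, h2]
    simp
  · rw [key swc 1, hswa, h2]
    simp
  · rw [key η 1, h1]
    simp

/-- the flip involution at a coordinate -/
def flipAt {n : ℕ} (i : Fin (n+1)) : Equiv.Perm (Fin (n+1) → Bool) :=
  Function.Involutive.toPerm (fun η => Function.update η i (!(η i)))
    (by
      intro η
      simp only [Function.update_self, Bool.not_not, Function.update_idem,
        Function.update_eq_self])

lemma flipAt_apply {n : ℕ} (i : Fin (n+1)) (η : Fin (n+1) → Bool) :
    flipAt i η = Function.update η i (!(η i)) := rfl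

set_option maxHeartbeats 1000000 in
lemma asepEvolve_flip (q α : ℝ) (n : ℕ) :
    ∀ (m : ℕ) (i : Fin (n+1)), (i : ℕ) < n - m → ∀ η : Fin (n+1) → Bool,
      asepEvolve q α n m (Function.update η i true) * (1 - α)
        = asepEvolve q α n m (Function.update η i false) * α := by
  intro m
  induction m with
  | zero =>
    intro i _ η
    have hcomp : ∀ v : Bool,
        (fun j => if Function.update η i v j then α else 1 - α)
          = Function.update (fun j => if η j then α else 1 - α) i
              (if v then α else 1 - α) := by
      intro v
      funext j
      by_cases h : j = i <;> simp [h, Function.update_apply]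
    have hE : ∀ v : Bool, asepEvolve q α n 0 (Function.update η i v)
        = (if v then α else 1 - α) * ∏ j ∈ Finset.univ \ {i}, (if η j then α else 1 - α) := by
      intro v
      show (∏ j, if Function.update η i v j then α else 1 - α) = _
      rw [hcomp v, Finset.prod_update_of_mem (Finset.mem_univ i)]
    rw [hE true, hE false]
    simp only [if_true, Bool.false_eq_true, if_false, ite_true, ite_false]
    ring
  | succ m ih =>
    intro i hi η'
    have hin : (i : ℕ) < n - m := by omega
    have hp : (n - m - 1) + 1 ≤ n := by omega
    have hia : (i : ℕ) ≠ n - m - 1 := by omega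
    have hib : (i : ℕ) ≠ (n - m - 1) + 1 := by omega
    show (∑ η, asepEvolve q α n m η * asepStep q n (n - m - 1) η (Function.update η' i true)) * (1 - α)
      = (∑ η, asepEvolve q α n m η * asepStep q n (n - m - 1) η (Function.update η' i false)) * α
    rw [Finset.sum_mul, Finset.sum_mul]
    rw [← Equiv.sum_comp (flipAt i)
      (fun η => asepEvolve q α n m η * asepStep q n (n - m - 1) η (Function.update η' i false) * α)]
    apply Finset.sum_congr rfl
    intro η _
    rcases hv : η i with _ | _
    · -- η i = false : both sides vanish / flip gives true
      have h0 : asepStep q n (n - m - 1) η (Function.update η' i true) = 0 :=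
        asepStep_vanish q hp hia hib η' (by simp [hv])
      have hflip : flipAt i η = Function.update η i true := by
        rw [flipAt_apply, hv]; rfl
      have h0' : asepStep q n (n - m - 1) (flipAt i η) (Function.update η' i false) = 0 := by
        rw [hflip]
        exact asepStep_vanish q hp hia hib η' (by simp)
      rw [h0, h0']
      ring
    · -- η i = true
      have hflip : flipAt i η = Function.update η i false := by
        rw [flipAt_apply, hv]; rfl
      have hstep : asepStep q n (n - m - 1) η (Function.update η' i true)
          = asepStep q n (n - m - 1) (Function.update η i false) (Function.update η' i false) :=
        asepStep_update q hp hia hib η' false hv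
      have hE : asepEvolve q α n m η * (1 - α)
          = asepEvolve q α n m (Function.update η i false) * α := by
        have := ih i hin η
        rwa [show Function.update η i true = η from by
          rw [← hv, Function.update_eq_self]] at this
      rw [hflip, hstep]
      calc asepEvolve q α n m η *
            asepStep q n (n - m - 1) (Function.update η i false) (Function.update η' i false) * (1 - α)
          = (asepEvolve q α n m η * (1 - α)) *
            asepStep q n (n - m - 1) (Function.update η i false) (Function.update η' i false) := by ring
        _ = (asepEvolve q α n m (Function.update η i false) * α) *
            asepStep q n (n - m - 1) (Function.update η i false) (Function.update η' i false) := by rw [hE]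
        _ = _ := by ring

set_option maxHeartbeats 1000000 in
lemma asepEvolve_occupation (q α : ℝ) (n : ℕ) :
    ∀ m : ℕ, m ≤ n →
      (∑ η : Fin (n+1) → Bool,
          if η ⟨n - m, by omega⟩ = true then asepEvolve q α n m η else 0)
        = α * (α + (1 - α) * q) ^ m := by
  intro m
  induction m with
  | zero =>
    intro _
    set j : Fin (n+1) := ⟨n - 0, by omega⟩ with hj
    set f : Fin (n+1) → Bool → ℝ :=
      fun i b => if i = j then (if b then α else 0) else (if b then α else 1 - α) with hf
    have h1 : ∀ η : Fin (n+1) → Bool,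
        (if η j = true then asepEvolve q α n 0 η else 0) = ∏ i, f i (η i) := by
      intro η
      show (if η j = true then ∏ i, (if η i then α else 1 - α) else 0) = _
      by_cases h : η j = true
      · rw [if_pos h]
        apply Finset.prod_congr rfl
        intro i _
        by_cases hij : i = j <;> simp [hf, hij, h]
      · rw [if_neg h]
        symm
        apply Finset.prod_eq_zero (Finset.mem_univ j)
        simp only [Bool.not_eq_true] at h
        simp [hf, h]
    rw [Finset.sum_congr rfl (fun η _ => h1 η), ← Fintype.piFinset_univ,
      ← Finset.prod_univ_sum]
    have h2 : ∀ i : Fin (n+1), (∑ b : Bool, f i b) = if i = j then α else 1 := by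
      intro i
      rw [Fintype.sum_bool]
      by_cases hij : i = j <;> simp [hf, hij] <;> ring
    rw [Finset.prod_congr rfl (fun i _ => h2 i)]
    simp [Finset.prod_ite_eq']
  | succ m ih =>
    intro hm
    have hmn : m ≤ n := by omega
    have hp : (n - m - 1) + 1 ≤ n := by omega
    set a : Fin (n+1) := ⟨n - m - 1, by omega⟩ with ha'
    set b : Fin (n+1) := ⟨(n - m - 1) + 1, by omega⟩ with hb'
    have hab : a ≠ b := by simp [ha', hb', Fin.ext_iff]
    have hbm : b = (⟨n - m, by omega⟩ : Fin (n+1)) := by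
      simp [hb', Fin.ext_iff]; omega
    -- step 1 : rewrite the sum using the column sums
    have step1 : (∑ η : Fin (n+1) → Bool,
          if η ⟨n - (m+1), by omega⟩ = true then asepEvolve q α n (m+1) η else 0)
        = ∑ η : Fin (n+1) → Bool, asepEvolve q α n m η *
            (if η b = true then (if η a = true then 1 else q) else 0) := by
      have e0 : ∀ η' : Fin (n+1) → Bool,
          (if η' ⟨n - (m+1), by omega⟩ = true then asepEvolve q α n (m+1) η' else 0)
            = ∑ η : Fin (n+1) → Bool,
                asepEvolve q α n m η *
                  (if η' a = true then asepStep q n (n - m - 1) η η' else 0) := by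
        intro η'
        have hidx : (⟨n - (m+1), by omega⟩ : Fin (n+1)) = a := by
          simp [ha', Fin.ext_iff]; omega
        rw [hidx]
        show (if η' a = true then
            ∑ η, asepEvolve q α n m η * asepStep q n (n - m - 1) η η' else 0) = _
        by_cases h : η' a = true <;> simp [h, Finset.mul_sum]
      rw [Finset.sum_congr rfl (fun η' _ => e0 η'), Finset.sum_comm]
      apply Finset.sum_congr rfl
      intro η _
      rw [← Finset.mul_sum, asepStep_colsum q hp η]
    rw [step1]
    -- step 2 : abstract the evolved measure, then algebraic splitting
    have hS0 : (∑ η : Fin (n+1) → Bool, if η b = true then asepEvolve q α n m η else 0)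
        = α * (α + (1 - α) * q) ^ m := by
      rw [Finset.sum_congr rfl (fun η _ => by rw [hbm])]
      exact ih hmn
    have hflipa : ∀ η : Fin (n+1) → Bool,
        asepEvolve q α n m (Function.update η a true) * (1 - α)
          = asepEvolve q α n m (Function.update η a false) * α :=
      fun η => asepEvolve_flip q α n m a (by simp [ha']; omega) η
    revert hS0 hflipa
    generalize asepEvolve q α n m = E
    intro hS0 hflipa
    have hUV : (∑ η : Fin (n+1) → Bool, if η a = true ∧ η b = true then E η else 0)
        + (∑ η : Fin (n+1) → Bool, if η a = false ∧ η b = true then E η else 0)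
        = (∑ η : Fin (n+1) → Bool, if η b = true then E η else 0) := by
      rw [← Finset.sum_add_distrib]
      exact Finset.sum_congr rfl (fun η _ => by
        rcases h1 : η a <;> rcases h2 : η b <;> simp [h1, h2])
    have hflipkey :
        (∑ η : Fin (n+1) → Bool, if η a = true ∧ η b = true then E η else 0) * (1 - α)
          = (∑ η : Fin (n+1) → Bool, if η a = false ∧ η b = true then E η else 0) * α := by
      rw [Finset.sum_mul, Finset.sum_mul,
        ← Equiv.sum_comp (flipAt a)
          (fun η => (if η a = false ∧ η b = true then E η else 0) * α)]
      apply Finset.sum_congr rfl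
      intro η _
      show _ = (if (flipAt a η) a = false ∧ (flipAt a η) b = true then E (flipAt a η) else 0) * α
      rcases h1 : η a with _ | _
      · have hfa : (flipAt a η) a = true := by
          rw [flipAt_apply, Function.update_self, h1]; rfl
        simp [h1, hfa]
      · have hflip : flipAt a η = Function.update η a false := by
          rw [flipAt_apply, h1]; rfl
        have hfa : (flipAt a η) a = false := by rw [hflip, Function.update_self]
        have hfb : (flipAt a η) b = η b := by
          rw [hflip, Function.update_of_ne hab.symm]
        rcases h2 : η b with _ | _
        · simp [h1, h2, hfa, hfb]
        · have hE : E η * (1 - α) = E (Function.update η a false) * α := by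
            have := hflipa η
            rwa [show Function.update η a true = η from by
              rw [← h1, Function.update_eq_self]] at this
          simp only [h1, h2, hfa, hfb, and_self, if_true, true_and]
          rw [hflip, hE]
    have hW : (∑ η : Fin (n+1) → Bool,
          E η * (if η b = true then (if η a = true then (1:ℝ) else q) else 0))
        = q * (∑ η : Fin (n+1) → Bool, if η b = true then E η else 0)
          + (1 - q) * (∑ η : Fin (n+1) → Bool,
              if η a = true ∧ η b = true then E η else 0) := by
      rw [Finset.mul_sum, Finset.mul_sum, ← Finset.sum_add_distrib]
      exact Finset.sum_congr rfl (fun η _ => by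
        rcases h1 : η a <;> rcases h2 : η b <;> simp [h1, h2] <;> ring)
    have hU' : (∑ η : Fin (n+1) → Bool, if η a = true ∧ η b = true then E η else 0)
        = α * (∑ η : Fin (n+1) → Bool, if η b = true then E η else 0) := by
      linear_combination hflipkey + α * hUV
    rw [hW, hU', hS0, pow_succ]
    ring

/-- Start from a Bernoulli(α) product configuration on sites `k, …, l` (relabelled `0, …, n`
with `n = l - k ≥ 1`) and sequentially apply ASEP discrete updates with parameter `q` at the
bonds `(l-1,l), (l-2,l-1), …, (k,k+1)` in this order.  Then for each `m = 1, …, n = l-k`,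
after the updates at the bonds `(l-1,l)` through `(l-m, l-m+1)` the probability that site
`l-m` (i.e. site `n-m` in the relabelling) is occupied equals `α(α + (1-α)q)^m`. -/
theorem asep_sequential_update_occupation
    (q α : ℝ) (hq0 : 0 ≤ q) (hq1 : q < 1) (hα0 : 0 < α) (hα1 : α ≤ 1)
    (n : ℕ) (hn : 1 ≤ n) (m : ℕ) (hm1 : 1 ≤ m) (hmn : m ≤ n) :
    ∑ η ∈ Finset.univ.filter
        (fun η : Fin (n + 1) → Bool => η ⟨n - m, by omega⟩ = true),
      asepEvolve q α n m η
    = α * (α + (1 - α) * q) ^ m := by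
  rw [Finset.sum_filter]
  exact asepEvolve_occupation q α n m hmn
end
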